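/- Let g(z, w) be an arbitrary formal power series in two variables over ℂ. Then there exist real formal power series f(z, w) and φ(z, w) such that f = z + w + (terms of total degree ≥ 2), φ consists only of terms of total degree ≥ 2, and D²f − 2·(Dφ)·(Df) = g in the formal power series ring. -/

import Mathlib

/-!
Formal power series in two variables `z, w` over `ℂ`, where `w` plays the role
of `z̄`.  A series is *real* if its coefficients satisfy `a_{jk} = conj a_{kj}`.
`Dz` is formal differentiation with respect to `z` (variable `0`).
-/

/-- Formal partial differentiation with respect to the first variable `z`. -/
noncomputable def Dz (g : MvPowerSeries (Fin 2) ℂ) : MvPowerSeries (Fin 2) ℂ :=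
  fun d => ((d 0 : ℕ) + 1 : ℂ) * MvPowerSeries.coeff (d + Finsupp.single 0 1) g

/-- A two-variable series is *real* if `a_{jk} = conj a_{kj}` for all `j, k`. -/
def IsRealSeries (f : MvPowerSeries (Fin 2) ℂ) : Prop :=
  ∀ j k : ℕ,
    MvPowerSeries.coeff (Finsupp.single 0 j + Finsupp.single 1 k) f =
      starRingEnd ℂ
        (MvPowerSeries.coeff (Finsupp.single 0 k + Finsupp.single 1 j) f)

namespace Stmt4Aux

open Finset

noncomputable section

/-- The inhomogeneous term `C(j,k)` built from tables `A` (coefficients of `f`)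
and `B` (coefficients of `φ`). -/
def Cfun (gc A B : ℕ → ℕ → ℂ) (j k : ℕ) : ℂ :=
  gc j k + 2 * ∑ x ∈ antidiagonal j, ∑ y ∈ antidiagonal k,
    (if (x.1, y.1) ≠ ((0 : ℕ), (0 : ℕ)) ∧ (x.2, y.2) ≠ ((0 : ℕ), (0 : ℕ)) then
      ((x.1 : ℂ) + 1) * B (x.1 + 1) y.1 * (((x.2 : ℂ) + 1) * A (x.2 + 1) y.2)
    else 0)

/-- New row of `a`-coefficients in total degree `S`; entry `p` means `a_{p, S-p}`. -/
def Lrow (gc CC : ℕ → ℕ → ℂ) (S : ℕ) : ℕ → ℂ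
  | 0 => 0
  | p + 1 =>
    if 2 * (p + 1) ≤ S then 0
    else if 2 * (p + 1) = S + 1 then
      CC (p - 1) p / (((p : ℂ) + 1) * (p : ℂ))
    else if p + 1 = S then (if S = 2 then gc 0 0 / 2 else 0)
    else
      (CC (p - 1) (S - (p + 1)) + ((p : ℂ) / ((S - (p + 1) : ℕ) : ℂ)) *
          ((((S - (p + 1) : ℕ) : ℂ) + 1) * ((S - (p + 1) : ℕ) : ℂ) * Lrow gc CC S p -
            (starRingEnd ℂ) (CC (S - (p + 1) - 1) p))) /
        (((p : ℂ) + 1) * (p : ℂ))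

def newA (gc : ℕ → ℕ → ℂ) (n : ℕ) (t : (ℕ → ℕ → ℂ) × (ℕ → ℕ → ℂ)) : ℕ → ℕ → ℂ :=
  fun p q =>
    if p + q = n + 2 then
      (if q ≤ p then Lrow gc (Cfun gc t.1 t.2) (n + 2) p
       else (starRingEnd ℂ) (Lrow gc (Cfun gc t.1 t.2) (n + 2) q))
    else t.1 p q

def braw (gc : ℕ → ℕ → ℂ) (n : ℕ) (t : (ℕ → ℕ → ℂ) × (ℕ → ℕ → ℂ)) (s u : ℕ) : ℂ :=
  (((s : ℂ) + 1) * (s : ℂ) * newA gc n t (s + 1) u - Cfun gc t.1 t.2 (s - 1) u) /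
    (2 * (s : ℂ))

def newB (gc : ℕ → ℕ → ℂ) (n : ℕ) (t : (ℕ → ℕ → ℂ) × (ℕ → ℕ → ℂ)) : ℕ → ℕ → ℂ :=
  fun s u =>
    if s + u = n + 1 then
      (if s = 0 then (starRingEnd ℂ) (braw gc n t (n + 1) 0) else braw gc n t s u)
    else t.2 s u

def T (gc : ℕ → ℕ → ℂ) : ℕ → ((ℕ → ℕ → ℂ) × (ℕ → ℕ → ℂ))
  | 0 => (fun p q => if p + q = 1 then 1 else 0, fun _ _ => 0)
  | n + 1 => (newA gc n (T gc n), newB gc n (T gc n))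

def aF (gc : ℕ → ℕ → ℂ) (p q : ℕ) : ℂ := (T gc (p + q)).1 p q
def bF (gc : ℕ → ℕ → ℂ) (s u : ℕ) : ℂ := (T gc (s + u)).2 s u
def CF (gc : ℕ → ℕ → ℂ) : ℕ → ℕ → ℂ := Cfun gc (aF gc) (bF gc)

lemma T_fst_stable (gc : ℕ → ℕ → ℂ) :
    ∀ m n, n ≤ m → ∀ p q, p + q ≤ n + 1 → (T gc m).1 p q = (T gc n).1 p q := by
  intro m
  induction m with
  | zero => intro n hn p q _; interval_cases n; rfl
  | succ m ih =>
    intro n hn p q hpq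
    rcases Nat.eq_or_lt_of_le hn with h | h
    · rw [h]
    · have hnm : n ≤ m := Nat.lt_succ_iff.mp h
      rw [← ih n hnm p q hpq]
      show newA gc m (T gc m) p q = (T gc m).1 p q
      unfold newA
      rw [if_neg (by omega)]

lemma T_snd_stable (gc : ℕ → ℕ → ℂ) :
    ∀ m n, n ≤ m → ∀ s u, s + u ≤ n → (T gc m).2 s u = (T gc n).2 s u := by
  intro m
  induction m with
  | zero => intro n hn s u _; interval_cases n; rfl
  | succ m ih =>
    intro n hn s u hsu
    rcases Nat.eq_or_lt_of_le hn with h | h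
    · rw [h]
    · have hnm : n ≤ m := Nat.lt_succ_iff.mp h
      rw [← ih n hnm s u hsu]
      show newB gc m (T gc m) s u = (T gc m).2 s u
      unfold newB
      rw [if_neg (by omega)]

lemma aF_eqT (gc : ℕ → ℕ → ℂ) {n p q : ℕ} (h : p + q ≤ n + 1) :
    aF gc p q = (T gc n).1 p q := by
  unfold aF
  by_cases hc : p + q ≤ n
  · exact (T_fst_stable gc n (p + q) hc p q (Nat.le_succ _)).symm
  · have hpq : p + q = n + 1 := by omega
    rw [hpq]
    exact T_fst_stable gc (n + 1) n (Nat.le_succ n) p q (by omega)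

lemma bF_eqT (gc : ℕ → ℕ → ℂ) {n s u : ℕ} (h : s + u ≤ n) :
    bF gc s u = (T gc n).2 s u := by
  unfold bF
  exact (T_snd_stable gc n (s + u) h s u le_rfl).symm

lemma CF_eqT (gc : ℕ → ℕ → ℂ) {n j k : ℕ} (h : j + k ≤ n) :
    Cfun gc (T gc n).1 (T gc n).2 j k = CF gc j k := by
  unfold CF Cfun
  congr 2
  apply Finset.sum_congr rfl
  intro x hx
  apply Finset.sum_congr rfl
  intro y hy
  rw [Finset.HasAntidiagonal.mem_antidiagonal] at hx hy
  split_ifs with hc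
  · obtain ⟨h1, h2⟩ := hc
    have h1' : ¬(x.1 = 0 ∧ y.1 = 0) := by simpa [Prod.ext_iff] using h1
    have h2' : ¬(x.2 = 0 ∧ y.2 = 0) := by simpa [Prod.ext_iff] using h2
    rw [show (T gc n).1 (x.2 + 1) y.2 = aF gc (x.2 + 1) y.2 from
        (aF_eqT gc (by omega)).symm,
      show (T gc n).2 (x.1 + 1) y.1 = bF gc (x.1 + 1) y.1 from
        (bF_eqT gc (by omega)).symm]
  · rfl

lemma Lrow_congr (gc C1 C2 : ℕ → ℕ → ℂ) (S : ℕ) (hS : 2 ≤ S)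
    (hC : ∀ j k, j + k + 2 = S → C1 j k = C2 j k) :
    ∀ p, p ≤ S → Lrow gc C1 S p = Lrow gc C2 S p := by
  intro p
  induction p with
  | zero => intro _; rfl
  | succ p ih =>
    intro hp
    simp only [Lrow]
    split_ifs with h1 h2 h3 h4
    · rfl
    · rw [hC (p - 1) p (by omega)]
    · rfl
    · rfl
    · rw [hC (p - 1) (S - (p + 1)) (by omega), hC (S - (p + 1) - 1) p (by omega),
        ih (by omega)]

lemma aF_row (gc : ℕ → ℕ → ℂ) {p q : ℕ} (h : 2 ≤ p + q) :
    aF gc p q =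
      if q ≤ p then Lrow gc (CF gc) (p + q) p
      else (starRingEnd ℂ) (Lrow gc (CF gc) (p + q) q) := by
  obtain ⟨n, hn⟩ : ∃ n, p + q = n + 2 := ⟨p + q - 2, by omega⟩
  have h1 : aF gc p q = (T gc (n + 1)).1 p q := aF_eqT gc (by omega)
  rw [h1]
  show newA gc n (T gc n) p q = _
  unfold newA
  rw [if_pos hn]
  have hL : ∀ r, r ≤ n + 2 →
      Lrow gc (Cfun gc (T gc n).1 (T gc n).2) (n + 2) r = Lrow gc (CF gc) (n + 2) r :=
    Lrow_congr gc _ _ (n + 2) (by omega) (fun j k hjk => CF_eqT gc (by omega))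
  rw [hn]
  split_ifs with hqp
  · rw [hL p (by omega)]
  · rw [hL q (by omega)]

lemma bF_formula (gc : ℕ → ℕ → ℂ) {s u : ℕ} (hs : 1 ≤ s) :
    bF gc s u =
      (((s : ℂ) + 1) * (s : ℂ) * aF gc (s + 1) u - CF gc (s - 1) u) / (2 * (s : ℂ)) := by
  obtain ⟨n, hn⟩ : ∃ n, s + u = n + 1 := ⟨s + u - 1, by omega⟩
  have h1 : bF gc s u = (T gc (n + 1)).2 s u := bF_eqT gc (by omega)
  rw [h1]
  show newB gc n (T gc n) s u = _
  unfold newB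
  rw [if_pos hn, if_neg (by omega)]
  unfold braw
  rw [CF_eqT gc (show s - 1 + u ≤ n by omega)]
  rw [show newA gc n (T gc n) (s + 1) u = (T gc (n + 1)).1 (s + 1) u from rfl]
  rw [← aF_eqT gc (show s + 1 + u ≤ (n + 1) + 1 by omega)]

lemma bF_left0 (gc : ℕ → ℕ → ℂ) {u : ℕ} (hu : 1 ≤ u) :
    bF gc 0 u = (starRingEnd ℂ) (bF gc u 0) := by
  obtain ⟨n, hn⟩ : ∃ n, u = n + 1 := ⟨u - 1, by omega⟩
  have h1 : bF gc 0 u = (T gc (n + 1)).2 0 u := bF_eqT gc (by omega)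
  rw [h1]
  show newB gc n (T gc n) 0 u = _
  unfold newB
  rw [if_pos (by omega), if_pos rfl]
  congr 1
  rw [bF_formula gc (show 1 ≤ u by omega)]
  unfold braw
  rw [CF_eqT gc (show n + 1 - 1 + 0 ≤ n by omega)]
  rw [show newA gc n (T gc n) (n + 1 + 1) 0 = (T gc (n + 1)).1 (n + 1 + 1) 0 from rfl]
  rw [← aF_eqT gc (show n + 1 + 1 + 0 ≤ (n + 1) + 1 by omega)]
  rw [hn]

-- Branch evaluation lemmas for `Lrow`.
lemma Lrow_diag (gc CC : ℕ → ℕ → ℂ) {S p : ℕ} (hp : 2 * p ≤ S) :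
    Lrow gc CC S p = 0 := by
  cases p with
  | zero => rfl
  | succ p => simp only [Lrow]; rw [if_pos hp]

lemma Lrow_d1 (gc CC : ℕ → ℕ → ℂ) {S : ℕ} (p : ℕ) (h : 2 * (p + 1) = S + 1) :
    Lrow gc CC S (p + 1) = CC (p - 1) p / (((p : ℂ) + 1) * (p : ℂ)) := by
  simp only [Lrow]
  rw [if_neg (by omega), if_pos h]

lemma Lrow_main (gc CC : ℕ → ℕ → ℂ) {S : ℕ} (p : ℕ) (h1 : S + 2 ≤ 2 * (p + 1))
    (h2 : p + 1 < S) :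
    Lrow gc CC S (p + 1) =
      (CC (p - 1) (S - (p + 1)) + ((p : ℂ) / ((S - (p + 1) : ℕ) : ℂ)) *
          ((((S - (p + 1) : ℕ) : ℂ) + 1) * ((S - (p + 1) : ℕ) : ℂ) * Lrow gc CC S p -
            (starRingEnd ℂ) (CC (S - (p + 1) - 1) p))) /
        (((p : ℂ) + 1) * (p : ℂ)) := by
  simp only [Lrow]
  rw [if_neg (by omega), if_neg (by omega), if_neg (by omega)]

lemma Lrow_22 (gc CC : ℕ → ℕ → ℂ) : Lrow gc CC 2 2 = gc 0 0 / 2 := by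
  show Lrow gc CC 2 (1 + 1) = _
  simp only [Lrow]
  norm_num

-- Base values.
lemma aF00 (gc : ℕ → ℕ → ℂ) : aF gc 0 0 = 0 := by
  show (T gc 0).1 0 0 = 0
  simp [T]

lemma aF10 (gc : ℕ → ℕ → ℂ) : aF gc 1 0 = 1 := by
  show (T gc 1).1 1 0 = 1
  show newA gc 0 (T gc 0) 1 0 = 1
  unfold newA
  rw [if_neg (by omega)]
  simp [T]

lemma aF01 (gc : ℕ → ℕ → ℂ) : aF gc 0 1 = 1 := by
  show (T gc 1).1 0 1 = 1
  show newA gc 0 (T gc 0) 0 1 = 1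
  unfold newA
  rw [if_neg (by omega)]
  simp [T]

lemma CF00 (gc : ℕ → ℕ → ℂ) : CF gc 0 0 = gc 0 0 := by
  unfold CF Cfun
  simp

lemma aF20 (gc : ℕ → ℕ → ℂ) : aF gc 2 0 = gc 0 0 / 2 := by
  rw [aF_row gc (show 2 ≤ 2 + 0 by omega), if_pos (by omega)]
  exact Lrow_22 gc _

lemma bF00 (gc : ℕ → ℕ → ℂ) : bF gc 0 0 = 0 := rfl

lemma bF10 (gc : ℕ → ℕ → ℂ) : bF gc 1 0 = 0 := by
  rw [bF_formula gc le_rfl]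
  rw [show (1 : ℕ) - 1 = 0 from rfl, CF00, aF20 gc]
  push_cast
  ring

lemma bF01 (gc : ℕ → ℕ → ℂ) : bF gc 0 1 = 0 := by
  rw [bF_left0 gc le_rfl, bF10, map_zero]

-- Reality of the `a`-table.
lemma aF_conj (gc : ℕ → ℕ → ℂ) (p q : ℕ) :
    aF gc p q = (starRingEnd ℂ) (aF gc q p) := by
  by_cases h2 : 2 ≤ p + q
  · rw [aF_row gc h2, aF_row gc (show 2 ≤ q + p by omega)]
    rw [show q + p = p + q by omega]
    rcases lt_trichotomy p q with h | h | h
    · rw [if_neg (by omega), if_pos (by omega)]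
    · rw [h, if_pos le_rfl, Lrow_diag gc _ (show 2 * q ≤ q + q by omega)]
      simp
    · rw [if_pos (by omega), if_neg (by omega), Complex.conj_conj]
  · have : p + q = 0 ∨ p + q = 1 := by omega
    rcases this with h | h
    · have hp : p = 0 := by omega
      have hq : q = 0 := by omega
      subst hp; subst hq
      rw [aF00]; simp
    · rcases (show p = 1 ∧ q = 0 ∨ p = 0 ∧ q = 1 by omega) with ⟨hp, hq⟩ | ⟨hp, hq⟩ <;>
        subst hp <;> subst hq
      · rw [aF10, aF01]; simp
      · rw [aF01, aF10]; simp

-- Diagonal of `b` vanishes.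
lemma bF_diag (gc : ℕ → ℕ → ℂ) {s : ℕ} (hs : 1 ≤ s) : bF gc s s = 0 := by
  rw [bF_formula gc hs]
  have hrow : aF gc (s + 1) s =
      CF gc (s - 1) s / (((s : ℂ) + 1) * (s : ℂ)) := by
    rw [aF_row gc (show 2 ≤ (s + 1) + s by omega), if_pos (by omega)]
    rw [Lrow_d1 gc (CF gc) s (by omega)]
  rw [hrow]
  have hs1 : ((s : ℂ) + 1) ≠ 0 := by
    have : ((s : ℂ) + 1) = ((s + 1 : ℕ) : ℂ) := by push_cast; ring
    rw [this]
    exact Nat.cast_ne_zero.mpr (by omega)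
  have hs0 : (s : ℂ) ≠ 0 := Nat.cast_ne_zero.mpr (by omega)
  field_simp
  ring

lemma bF_conj_main (gc : ℕ → ℕ → ℂ) {s t : ℕ} (ht : 1 ≤ t) (hst : t < s) :
    bF gc s t = (starRingEnd ℂ) (bF gc t s) := by
  have hs : 1 ≤ s := by omega
  have e1 : s + (t + 1) = s + 1 + t := by omega
  have hrow2 : aF gc s (t + 1) = Lrow gc (CF gc) (s + 1 + t) s := by
    rw [aF_row gc (show 2 ≤ s + (t + 1) by omega), if_pos (by omega), e1]
  have e2 : s + 1 + t - (s + 1) = t := by omega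
  have e3 : s + 1 + t - (s + 1) - 1 = t - 1 := by omega
  have hrow : aF gc (s + 1) t =
      (CF gc (s - 1) t + ((s : ℂ) / (t : ℂ)) *
          (((t : ℂ) + 1) * (t : ℂ) * aF gc s (t + 1) -
            (starRingEnd ℂ) (CF gc (t - 1) s))) / (((s : ℂ) + 1) * (s : ℂ)) := by
    rw [aF_row gc (show 2 ≤ s + 1 + t by omega), if_pos (by omega),
      Lrow_main gc (CF gc) s (by omega) (by omega), e2, ← hrow2]
  rw [bF_formula gc hs, bF_formula gc ht, hrow, aF_conj gc (t + 1) s]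
  simp only [map_div₀, map_sub, map_mul, map_add, map_one, map_ofNat,
    Complex.conj_conj, map_natCast]
  have hs0 : (s : ℂ) ≠ 0 := Nat.cast_ne_zero.mpr (by omega)
  have ht0 : (t : ℂ) ≠ 0 := Nat.cast_ne_zero.mpr (by omega)
  have hs1 : ((s : ℂ) + 1) ≠ 0 := by
    have : ((s : ℂ) + 1) = ((s + 1 : ℕ) : ℂ) := by push_cast; ring
    rw [this]; exact Nat.cast_ne_zero.mpr (by omega)
  field_simp
  ring

lemma bF_conj (gc : ℕ → ℕ → ℂ) (s u : ℕ) :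
    bF gc s u = (starRingEnd ℂ) (bF gc u s) := by
  rcases lt_trichotomy s u with h | h | h
  · rcases Nat.eq_zero_or_pos s with hs | hs
    · subst hs; exact bF_left0 gc (by omega)
    · rw [bF_conj_main gc hs h, Complex.conj_conj]
  · subst h
    rcases Nat.eq_zero_or_pos s with hs | hs
    · subst hs; rw [bF00]; simp
    · rw [bF_diag gc hs]; simp
  · rcases Nat.eq_zero_or_pos u with hu | hu
    · subst hu
      rw [bF_left0 gc (show 1 ≤ s by omega), Complex.conj_conj]
    · exact bF_conj_main gc hu h

lemma main_identity (gc : ℕ → ℕ → ℂ) (j k : ℕ) :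
    ((j : ℂ) + 1 + 1) * (((j : ℂ) + 1) * aF gc (j + 1 + 1) k) -
      2 * ∑ x ∈ antidiagonal j, ∑ y ∈ antidiagonal k,
        (((x.1 : ℂ) + 1) * bF gc (x.1 + 1) y.1 *
          (((x.2 : ℂ) + 1) * aF gc (x.2 + 1) y.2)) =
      gc j k := by
  have hsum : (∑ x ∈ antidiagonal j, ∑ y ∈ antidiagonal k,
        (((x.1 : ℂ) + 1) * bF gc (x.1 + 1) y.1 *
          (((x.2 : ℂ) + 1) * aF gc (x.2 + 1) y.2))) =
      (∑ x ∈ antidiagonal j, ∑ y ∈ antidiagonal k,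
        (if (x.2, y.2) = ((0 : ℕ), (0 : ℕ)) then
          ((x.1 : ℂ) + 1) * bF gc (x.1 + 1) y.1 *
            (((x.2 : ℂ) + 1) * aF gc (x.2 + 1) y.2) else 0)) +
      (∑ x ∈ antidiagonal j, ∑ y ∈ antidiagonal k,
        (if (x.1, y.1) = ((0 : ℕ), (0 : ℕ)) ∧ (x.2, y.2) ≠ ((0 : ℕ), (0 : ℕ)) then
          ((x.1 : ℂ) + 1) * bF gc (x.1 + 1) y.1 *
            (((x.2 : ℂ) + 1) * aF gc (x.2 + 1) y.2) else 0)) +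
      (∑ x ∈ antidiagonal j, ∑ y ∈ antidiagonal k,
        (if (x.1, y.1) ≠ ((0 : ℕ), (0 : ℕ)) ∧ (x.2, y.2) ≠ ((0 : ℕ), (0 : ℕ)) then
          ((x.1 : ℂ) + 1) * bF gc (x.1 + 1) y.1 *
            (((x.2 : ℂ) + 1) * aF gc (x.2 + 1) y.2) else 0)) := by
    rw [← Finset.sum_add_distrib, ← Finset.sum_add_distrib]
    apply Finset.sum_congr rfl
    intro x _
    rw [← Finset.sum_add_distrib, ← Finset.sum_add_distrib]
    apply Finset.sum_congr rfl
    intro y _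
    by_cases hx1 : x.1 = 0 <;> by_cases hy1 : y.1 = 0 <;>
      by_cases hx2 : x.2 = 0 <;> by_cases hy2 : y.2 = 0 <;>
      simp [Prod.ext_iff, hx1, hy1, hx2, hy2]
  have hS1 : (∑ x ∈ antidiagonal j, ∑ y ∈ antidiagonal k,
        (if (x.1, y.1) = ((0 : ℕ), (0 : ℕ)) ∧ (x.2, y.2) ≠ ((0 : ℕ), (0 : ℕ)) then
          ((x.1 : ℂ) + 1) * bF gc (x.1 + 1) y.1 *
            (((x.2 : ℂ) + 1) * aF gc (x.2 + 1) y.2) else 0)) = 0 := by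
    apply Finset.sum_eq_zero
    intro x _
    apply Finset.sum_eq_zero
    intro y _
    split_ifs with h
    · have hx1 : x.1 = 0 := congrArg Prod.fst h.1
      have hy1 : y.1 = 0 := congrArg Prod.snd h.1
      simp [hx1, hy1, bF10]
    · rfl
  have hS0 : (∑ x ∈ antidiagonal j, ∑ y ∈ antidiagonal k,
        (if (x.2, y.2) = ((0 : ℕ), (0 : ℕ)) then
          ((x.1 : ℂ) + 1) * bF gc (x.1 + 1) y.1 *
            (((x.2 : ℂ) + 1) * aF gc (x.2 + 1) y.2) else 0)) =
      ((j : ℂ) + 1) * bF gc (j + 1) k := by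
    rw [Finset.sum_eq_single_of_mem ((j, 0) : ℕ × ℕ)
      (Finset.HasAntidiagonal.mem_antidiagonal.mpr (by omega))]
    · rw [Finset.sum_eq_single_of_mem ((k, 0) : ℕ × ℕ)
        (Finset.HasAntidiagonal.mem_antidiagonal.mpr (by omega))]
      · simp [aF10]
      · intro y hy hne
        rw [if_neg]
        intro hcon
        have : y.2 = 0 := congrArg Prod.snd hcon
        rw [Finset.HasAntidiagonal.mem_antidiagonal] at hy
        exact hne (Prod.ext (by omega) this)
    · intro x hx hne
      apply Finset.sum_eq_zero
      intro y _
      rw [if_neg]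
      intro hcon
      have : x.2 = 0 := congrArg Prod.fst hcon
      rw [Finset.HasAntidiagonal.mem_antidiagonal] at hx
      exact hne (Prod.ext (by omega) this)
  have hCF : CF gc j k = gc j k +
      2 * (∑ x ∈ antidiagonal j, ∑ y ∈ antidiagonal k,
        (if (x.1, y.1) ≠ ((0 : ℕ), (0 : ℕ)) ∧ (x.2, y.2) ≠ ((0 : ℕ), (0 : ℕ)) then
          ((x.1 : ℂ) + 1) * bF gc (x.1 + 1) y.1 *
            (((x.2 : ℂ) + 1) * aF gc (x.2 + 1) y.2) else 0)) := rfl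
  have hb : bF gc (j + 1) k =
      (((j : ℂ) + 1 + 1) * ((j : ℂ) + 1) * aF gc (j + 1 + 1) k - CF gc j k) /
        (2 * ((j : ℂ) + 1)) := by
    rw [bF_formula gc (show 1 ≤ j + 1 by omega)]
    push_cast
    norm_num
  have hj1 : ((j : ℂ) + 1) ≠ 0 := by
    have : ((j : ℂ) + 1) = ((j + 1 : ℕ) : ℂ) := by push_cast; ring
    rw [this]; exact Nat.cast_ne_zero.mpr (by omega)
  rw [hsum, hS1, hS0, hb]
  rw [hCF]
  field_simp
  ring

-- Finsupp helpers on `Fin 2`.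
lemma fin2_eta (u : Fin 2 →₀ ℕ) :
    Finsupp.single (0 : Fin 2) (u 0) + Finsupp.single 1 (u 1) = u := by
  ext i
  fin_cases i <;> simp [Finsupp.single_apply]

lemma idx0 (j k : ℕ) :
    ((Finsupp.single (0 : Fin 2) j + Finsupp.single 1 k : Fin 2 →₀ ℕ)) 0 = j := by
  simp [Finsupp.single_apply]

lemma idx1 (j k : ℕ) :
    ((Finsupp.single (0 : Fin 2) j + Finsupp.single 1 k : Fin 2 →₀ ℕ)) 1 = k := by
  simp [Finsupp.single_apply]

lemma add_e0_0 (d : Fin 2 →₀ ℕ) : ((d + Finsupp.single 0 1 : Fin 2 →₀ ℕ)) 0 = d 0 + 1 := by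
  simp

lemma add_e0_1 (d : Fin 2 →₀ ℕ) : ((d + Finsupp.single 0 1 : Fin 2 →₀ ℕ)) 1 = d 1 := by
  simp [Finsupp.single_apply]

-- The power series built from the coefficient tables.
def fS (gc : ℕ → ℕ → ℂ) : MvPowerSeries (Fin 2) ℂ := fun d => aF gc (d 0) (d 1)
def pS (gc : ℕ → ℕ → ℂ) : MvPowerSeries (Fin 2) ℂ := fun d => bF gc (d 0) (d 1)

lemma coeff_fS (gc : ℕ → ℕ → ℂ) (d : Fin 2 →₀ ℕ) :
    MvPowerSeries.coeff d (fS gc) = aF gc (d 0) (d 1) :=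
  MvPowerSeries.coeff_apply _ _

lemma coeff_pS (gc : ℕ → ℕ → ℂ) (d : Fin 2 →₀ ℕ) :
    MvPowerSeries.coeff d (pS gc) = bF gc (d 0) (d 1) :=
  MvPowerSeries.coeff_apply _ _

lemma coeff_Dz (h : MvPowerSeries (Fin 2) ℂ) (d : Fin 2 →₀ ℕ) :
    MvPowerSeries.coeff d (Dz h) =
      ((d 0 : ℕ) + 1 : ℂ) * MvPowerSeries.coeff (d + Finsupp.single 0 1) h :=
  MvPowerSeries.coeff_apply _ _

lemma coeff_Dz_pS (gc : ℕ → ℕ → ℂ) (d : Fin 2 →₀ ℕ) :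
    MvPowerSeries.coeff d (Dz (pS gc)) =
      ((d 0 : ℂ) + 1) * bF gc (d 0 + 1) (d 1) := by
  rw [coeff_Dz, coeff_pS, add_e0_0, add_e0_1]

lemma coeff_Dz_fS (gc : ℕ → ℕ → ℂ) (d : Fin 2 →₀ ℕ) :
    MvPowerSeries.coeff d (Dz (fS gc)) =
      ((d 0 : ℂ) + 1) * aF gc (d 0 + 1) (d 1) := by
  rw [coeff_Dz, coeff_fS, add_e0_0, add_e0_1]

lemma sum_conv (gc : ℕ → ℕ → ℂ) (d : Fin 2 →₀ ℕ) :
    ∑ p ∈ antidiagonal d,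
      MvPowerSeries.coeff p.1 (Dz (pS gc)) * MvPowerSeries.coeff p.2 (Dz (fS gc)) =
    ∑ x ∈ antidiagonal (d 0), ∑ y ∈ antidiagonal (d 1),
      (((x.1 : ℂ) + 1) * bF gc (x.1 + 1) y.1 *
        (((x.2 : ℂ) + 1) * aF gc (x.2 + 1) y.2)) := by
  rw [← Finset.sum_product']
  apply Finset.sum_nbij' (i := fun p : (Fin 2 →₀ ℕ) × (Fin 2 →₀ ℕ) =>
      ((p.1 0, p.2 0), (p.1 1, p.2 1)))
    (j := fun z : (ℕ × ℕ) × (ℕ × ℕ) =>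
      (Finsupp.single 0 z.1.1 + Finsupp.single 1 z.2.1,
       Finsupp.single 0 z.1.2 + Finsupp.single 1 z.2.2))
  · intro p hp
    rw [Finset.HasAntidiagonal.mem_antidiagonal] at hp
    simp only [Finset.mem_product, Finset.HasAntidiagonal.mem_antidiagonal]
    constructor
    · show p.1 0 + p.2 0 = d 0
      rw [← Finsupp.add_apply, hp]
    · show p.1 1 + p.2 1 = d 1
      rw [← Finsupp.add_apply, hp]
  · intro z hz
    simp only [Finset.mem_product, Finset.HasAntidiagonal.mem_antidiagonal] at hz
    rw [Finset.HasAntidiagonal.mem_antidiagonal]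
    ext i
    fin_cases i
    · show ((_ + _ : Fin 2 →₀ ℕ)) (0 : Fin 2) = d 0
      rw [Finsupp.add_apply, idx0, idx0]
      exact hz.1
    · show ((_ + _ : Fin 2 →₀ ℕ)) (1 : Fin 2) = d 1
      rw [Finsupp.add_apply, idx1, idx1]
      exact hz.2
  · intro p _
    ext i : 2
    · exact (congrFun (congrArg _ (fin2_eta p.1)) i : _)
    · exact (congrFun (congrArg _ (fin2_eta p.2)) i : _)
  · intro z _
    simp [idx0, idx1]
  · intro p _
    rw [coeff_Dz_pS, coeff_Dz_fS]

end

end Stmt4Aux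

/-- for any formal power series `g ∈ ℂ[[z,w]]` there are real
formal power series `f = z + w + O(deg ≥ 2)` and `φ = O(deg ≥ 2)` with
`D²f − 2(Dφ)(Df) = g`. -/
theorem stmt4 (g : MvPowerSeries (Fin 2) ℂ) :
    ∃ f φ : MvPowerSeries (Fin 2) ℂ, IsRealSeries f ∧ IsRealSeries φ ∧
      MvPowerSeries.coeff 0 f = 0 ∧
      MvPowerSeries.coeff (Finsupp.single 0 1) f = 1 ∧
      MvPowerSeries.coeff (Finsupp.single 1 1) f = 1 ∧
      (∀ d : Fin 2 →₀ ℕ, d 0 + d 1 ≤ 1 → MvPowerSeries.coeff d φ = 0) ∧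
      Dz (Dz f) - 2 * Dz φ * Dz f = g := by
  set gc : ℕ → ℕ → ℂ :=
    fun j k => MvPowerSeries.coeff (Finsupp.single 0 j + Finsupp.single 1 k) g with hgc
  refine ⟨Stmt4Aux.fS gc, Stmt4Aux.pS gc, ?_, ?_, ?_, ?_, ?_, ?_, ?_⟩
  · intro j k
    rw [Stmt4Aux.coeff_fS, Stmt4Aux.coeff_fS, Stmt4Aux.idx0, Stmt4Aux.idx1,
      Stmt4Aux.idx0, Stmt4Aux.idx1]
    exact Stmt4Aux.aF_conj gc j k
  · intro j k
    rw [Stmt4Aux.coeff_pS, Stmt4Aux.coeff_pS, Stmt4Aux.idx0, Stmt4Aux.idx1,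
      Stmt4Aux.idx0, Stmt4Aux.idx1]
    exact Stmt4Aux.bF_conj gc j k
  · rw [Stmt4Aux.coeff_fS]
    simp only [Finsupp.coe_zero, Pi.zero_apply]
    exact Stmt4Aux.aF00 gc
  · rw [Stmt4Aux.coeff_fS]
    rw [show (Finsupp.single (0 : Fin 2) 1) 0 = 1 from by simp,
      show (Finsupp.single (0 : Fin 2) 1) 1 = 0 from by simp [Finsupp.single_apply]]
    exact Stmt4Aux.aF10 gc
  · rw [Stmt4Aux.coeff_fS]
    rw [show (Finsupp.single (1 : Fin 2) 1) 0 = 0 from by simp [Finsupp.single_apply],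
      show (Finsupp.single (1 : Fin 2) 1) 1 = 1 from by simp]
    exact Stmt4Aux.aF01 gc
  · intro d hd
    rw [Stmt4Aux.coeff_pS]
    rcases (show d 0 = 0 ∧ d 1 = 0 ∨ d 0 = 1 ∧ d 1 = 0 ∨ d 0 = 0 ∧ d 1 = 1 by omega) with
      ⟨h0, h1⟩ | ⟨h0, h1⟩ | ⟨h0, h1⟩ <;> rw [h0, h1]
    exacts [Stmt4Aux.bF00 gc, Stmt4Aux.bF10 gc, Stmt4Aux.bF01 gc]
  · ext d
    rw [map_sub]
    have h2 : (2 : MvPowerSeries (Fin 2) ℂ) * Dz (Stmt4Aux.pS gc) * Dz (Stmt4Aux.fS gc)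
        = Dz (Stmt4Aux.pS gc) * Dz (Stmt4Aux.fS gc)
          + Dz (Stmt4Aux.pS gc) * Dz (Stmt4Aux.fS gc) := by ring
    rw [h2, map_add, MvPowerSeries.coeff_mul, Stmt4Aux.sum_conv,
      Stmt4Aux.coeff_Dz, Stmt4Aux.coeff_Dz_fS, Stmt4Aux.add_e0_0, Stmt4Aux.add_e0_1]
    have hg : MvPowerSeries.coeff d g = gc (d 0) (d 1) := by
      have : gc (d 0) (d 1) =
          MvPowerSeries.coeff (Finsupp.single 0 (d 0) + Finsupp.single 1 (d 1)) g := rfl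
      rw [this, Stmt4Aux.fin2_eta]
    rw [hg]
    have key := Stmt4Aux.main_identity gc (d 0) (d 1)
    push_cast
    linear_combination key
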